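/- Let p be a prime and λ a positive integer. Let α_1,…,α_j, β_1,…,β_k be positive integers, let γ_1,…,γ_j, δ_1,…,δ_k be positive integers, and let a_1,…,a_j, b_1,…,b_k be positive integers. Define integer sequences A(n) and B(n) as the coefficients of q^n in the formal power series ∏_{i=1}^{j} f_{α_i}^{γ_i} / ∏_{i=1}^{k} f_{β_i}^{δ_i} and ∏_{i=1}^{j} f_{α_i}^{a_i p^λ + γ_i} / ∏_{i=1}^{k} f_{β_i}^{b_i p^λ + δ_i}, respectively. If C is an integer with 1 ≤ C ≤ p^λ − 1 and A(p^λ n + C) ≡ 0 (mod p) for all n ≥ 0, then B(p^λ n + C) ≡ 0 (mod p) for all n ≥ 0. -/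

import Mathlib

/-- `etaProd m` is the formal power series `f_m = ∏_{n ≥ 1} (1 - q^{m n})` over `ℤ`.
Since the factors with `m * n > N` do not affect the coefficient of `q^N`, the coefficient
of `q^N` equals the corresponding coefficient of the finite product over `1 ≤ n ≤ N + 1`. -/
noncomputable def etaProd (m : ℕ) : PowerSeries ℤ :=
  PowerSeries.mk fun N =>
    PowerSeries.coeff (R := ℤ) N
      (∏ n ∈ Finset.range (N + 1), (1 - PowerSeries.X ^ (m * (n + 1))))

/-!
Modulo `p` the `B`-series is the `A`-series times `W ^ p ^ λ`, where
`W = ∏ f_{α_i} ^ a_i / ∏ f_{β_i} ^ b_i`. By the Frobenius, `W ^ p ^ λ` only involves powers of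
`q ^ p ^ λ`, and multiplying by such a series preserves the vanishing of all coefficients in a
residue class modulo `p ^ λ`.
-/

open PowerSeries

theorem PowerSeries.coeff_pow_expChar_pow_of_not_dvd {R : Type*} [CommRing R] (p : ℕ)
    [ExpChar R p] (n : ℕ) (f : R⟦X⟧) {m : ℕ} (h : ¬ p ^ n ∣ m) : coeff m (f ^ p ^ n) = 0 := by
  rw [← MvPowerSeries.map_iterateFrobenius_expand p (expChar_ne_zero R p) f n]
  -- `PowerSeries R` is `MvPowerSeries Unit R`, so the multivariate identity applies as is.
  change coeff m (map _ (expand _ _ f)) = 0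
  rw [coeff_map, coeff_expand_of_not_dvd _ _ f h, map_zero]

theorem PowerSeries.coeff_mul_eq_zero_of_modEq {R : Type*} [Semiring R] {q c : ℕ} {F G : R⟦X⟧}
    (hF : ∀ t, t ≡ c [MOD q] → coeff t F = 0) (hG : ∀ t, ¬ q ∣ t → coeff t G = 0)
    {t : ℕ} (ht : t ≡ c [MOD q]) : coeff t (F * G) = 0 := by
  rw [coeff_mul]
  refine Finset.sum_eq_zero fun x hx => ?_
  rw [Finset.HasAntidiagonal.mem_antidiagonal] at hx
  by_cases hq : q ∣ x.2
  · have hx₁ : x.1 ≡ t [MOD q] := by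
      simpa [hx] using ((Nat.modEq_zero_iff_dvd.mpr hq).add_left x.1).symm
    rw [hF _ (hx₁.trans ht), zero_mul]
  · rw [hG _ hq, mul_zero]

theorem PowerSeries.coeff_modEq_zero_iff_coeff_map_eq_zero (p t : ℕ) (F : ℤ⟦X⟧) :
    coeff t F ≡ 0 [ZMOD p] ↔ coeff t (map (Int.castRingHom (ZMod p)) F) = 0 := by
  rw [coeff_map, eq_intCast, ZMod.intCast_zmod_eq_zero_iff_dvd, Int.modEq_zero_iff_dvd]

theorem Nat.eq_mul_div_add_of_modEq {t c q : ℕ} (hc : c < q) (h : t ≡ c [MOD q]) :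
    t = q * (t / q) + c := by
  have := Nat.div_add_mod t q
  rw [h, Nat.mod_eq_of_lt hc] at this
  exact this.symm

theorem stmt19_general (p : ℕ) (hp : p.Prime) (lam : ℕ)
    (J K : ℕ) (α γ a : Fin J → ℕ) (β δ b : Fin K → ℕ)
    (A B : ℕ → ℤ)
    (hA : ∀ n, A n = PowerSeries.coeff (R := ℤ) n
      ((∏ i, (etaProd (α i)) ^ (γ i)) *
        ∏ i, (PowerSeries.invOfUnit (etaProd (β i)) 1) ^ (δ i)))
    (hB : ∀ n, B n = PowerSeries.coeff (R := ℤ) n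
      ((∏ i, (etaProd (α i)) ^ (a i * p ^ lam + γ i)) *
        ∏ i, (PowerSeries.invOfUnit (etaProd (β i)) 1) ^ (b i * p ^ lam + δ i)))
    (C : ℕ) (hC2 : C ≤ p ^ lam - 1)
    (hAcong : ∀ n : ℕ, A (p ^ lam * n + C) ≡ 0 [ZMOD p]) :
    ∀ n : ℕ, B (p ^ lam * n + C) ≡ 0 [ZMOD p] := by
  intro n
  have : Fact p.Prime := ⟨hp⟩
  have hC : C < p ^ lam := by have := pow_pos hp.pos lam; omega
  have hfactor : (∏ i, etaProd (α i) ^ (a i * p ^ lam + γ i)) *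
        ∏ i, invOfUnit (etaProd (β i)) 1 ^ (b i * p ^ lam + δ i) =
      ((∏ i, etaProd (α i) ^ γ i) * ∏ i, invOfUnit (etaProd (β i)) 1 ^ δ i) *
        ((∏ i, etaProd (α i) ^ a i) * ∏ i, invOfUnit (etaProd (β i)) 1 ^ b i) ^ p ^ lam := by
    simp only [pow_add, pow_mul, Finset.prod_mul_distrib, Finset.prod_pow, mul_pow]
    ring
  rw [hB, hfactor, coeff_modEq_zero_iff_coeff_map_eq_zero, map_mul, map_pow]
  refine coeff_mul_eq_zero_of_modEq (c := C) (fun t ht => ?_)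
    (fun t ht => coeff_pow_expChar_pow_of_not_dvd p lam _ ht) (by simp [Nat.ModEq])
  rw [← coeff_modEq_zero_iff_coeff_map_eq_zero, Nat.eq_mul_div_add_of_modEq hC ht, ← hA]
  exact hAcong _

theorem stmt19 (p : ℕ) (hp : p.Prime) (lam : ℕ) (hlam : 0 < lam)
    (J K : ℕ) (α γ a : Fin J → ℕ) (β δ b : Fin K → ℕ)
    (hα : ∀ i, 0 < α i) (hγ : ∀ i, 0 < γ i) (ha : ∀ i, 0 < a i)
    (hβ : ∀ i, 0 < β i) (hδ : ∀ i, 0 < δ i) (hb : ∀ i, 0 < b i)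
    (A B : ℕ → ℤ)
    (hA : ∀ n, A n = PowerSeries.coeff (R := ℤ) n
      ((∏ i, (etaProd (α i)) ^ (γ i)) *
        ∏ i, (PowerSeries.invOfUnit (etaProd (β i)) 1) ^ (δ i)))
    (hB : ∀ n, B n = PowerSeries.coeff (R := ℤ) n
      ((∏ i, (etaProd (α i)) ^ (a i * p ^ lam + γ i)) *
        ∏ i, (PowerSeries.invOfUnit (etaProd (β i)) 1) ^ (b i * p ^ lam + δ i)))
    (C : ℕ) (hC1 : 1 ≤ C) (hC2 : C ≤ p ^ lam - 1)
    (hAcong : ∀ n : ℕ, A (p ^ lam * n + C) ≡ 0 [ZMOD p]) :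
    ∀ n : ℕ, B (p ^ lam * n + C) ≡ 0 [ZMOD p] :=
  stmt19_general p hp lam J K α γ a β δ b A B hA hB C hC2 hAcong
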